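/- arXiv:1812.11681 — 2 statements merged into one kernel-verified Lean document; each statement's English description precedes it below -/
import Mathlib

section
/- Let a_1,a_2,a_3,a_4 be complex numbers, m ∈ {1,2,3,4}, and {n,p,q} = {1,2,3,4}∖{m}. For a nonnegative integer δ and s_2, s_3 ∈ ℂ, define R_δ(s_2,s_3) = (1/Γ(s_2+s_3+a_m+δ))·[Π_{k∈{n,p,q}} Γ(a_k−a_m−δ)·Γ(s_3−a_k)·Γ(s_2+a_k+a_m)]·p_δ(s_3−a_n, s_3−a_p, s_3−a_q; s_2+s_3+a_m, 1+a_m−s_2+s_3, s_3−a_m−δ). Fix a nonnegative integer δ, and assume that none of the complex numbers a_k−a_m−δ, a_k−a_m−δ−1, s_3−a_k, s_3+1−a_k, s_2+a_k+a_m (for k ∈ {n,p,q}), s_2+s_3+a_m+δ, s_2+s_3+a_m+δ+1 is a nonpositive integer. Then B(−a_m−δ−1, s_2, s_3)·R_δ(s_2,s_3) + R_δ(s_2,s_3+1) = −(δ+1)·[Π_{k∈{n,p,q}}(a_k−a_m−δ−1)]·R_{δ+1}(s_2,s_3). (This is the inductive step showing that the residue of the GL(4) Whittaker Mellin transform T_{4,a}(s)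 at s_1 = −a_m−δ equals R_δ(s_2,s_3).) -/
set_option maxRecDepth 100000
set_option maxHeartbeats 2000000


open Finset

/-- The ascending Pochhammer symbol `(x)_k = x(x+1)⋯(x+k-1)`, with `(x)_0 = 1`. -/
noncomputable def poch (x : ℂ) (k : ℕ) : ℂ := ∏ i ∈ Finset.range k, (x + i)

/-- The polynomial `p_δ(b,c,d;e,f,g)` of Stade–Trinh, Lemma 4.2. -/
noncomputable def pdelta (δ : ℕ) (b c d e f g : ℂ) : ℂ :=
  ∑ κ ∈ Finset.range (δ + 1),
    (-1 : ℂ) ^ κ * poch b κ * poch c κ * poch d κ *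
        poch (e + κ) (δ - κ) * poch (f + κ) (δ - κ) * poch (g + κ) (δ - κ) /
      ((κ.factorial : ℂ) * ((δ - κ).factorial : ℂ))

/-- `B(p,q,r) = (p+q-r)(p+r)`. -/
noncomputable def Brec (p q r : ℂ) : ℂ := (p + q - r) * (p + r)

/-- `x` is not a nonpositive integer (i.e. `x ≠ 0, -1, -2, …`). -/
def NotNonposInt (x : ℂ) : Prop := ∀ N : ℕ, x ≠ -(N : ℂ)

/-- The residue `R_δ(s_2,s_3)` of `T_{4,a}(s)` at `s_1 = −a_m − δ`
(Proposition 4.3(a) of Stade–Trinh). -/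
noncomputable def Rres (a : Fin 4 → ℂ) (m n p q : Fin 4) (δ : ℕ) (s2 s3 : ℂ) : ℂ :=
  (1 / Complex.Gamma (s2 + s3 + a m + δ)) *
    ((Complex.Gamma (a n - a m - δ) * Complex.Gamma (s3 - a n) *
        Complex.Gamma (s2 + a n + a m)) *
      (Complex.Gamma (a p - a m - δ) * Complex.Gamma (s3 - a p) *
        Complex.Gamma (s2 + a p + a m)) *
      (Complex.Gamma (a q - a m - δ) * Complex.Gamma (s3 - a q) *
        Complex.Gamma (s2 + a q + a m))) *
    pdelta δ (s3 - a n) (s3 - a p) (s3 - a q)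
      (s2 + s3 + a m) (1 + a m - s2 + s3) (s3 - a m - δ)

lemma poch_succ (x : ℂ) (k : ℕ) : poch x (k+1) = poch x k * (x + k) :=
  Finset.prod_range_succ _ _

lemma poch_succ' (x : ℂ) (k : ℕ) : poch x (k+1) = x * poch (x+1) k := by
  unfold poch
  rw [Finset.prod_range_succ']
  simp only [Nat.cast_zero, add_zero, Nat.cast_add, Nat.cast_one]
  rw [mul_comm]
  congr 1
  exact Finset.prod_congr rfl fun i _ => by ring

lemma hfacC (k : ℕ) : ((k.factorial : ℂ)) ≠ 0 := Nat.cast_ne_zero.2 k.factorial_ne_zero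

lemma key (x y z S F g : ℂ) (δ : ℕ) :
    -((F+δ)*(g-1)*(S+δ)) * pdelta δ x y z S F g
      + x*y*z * pdelta δ (x+1) (y+1) (z+1) (S+1) (F+1) (g+1)
      = -((δ:ℂ)+1) * pdelta (δ+1) x y z S F (g-1) := by
  set Bf : ℕ → ℂ := fun j => -(j:ℂ) * ((-1:ℂ)^j * poch x j * poch y j * poch z j *
      poch (S+(j:ℂ)) (δ+1-j) * poch (F+(j:ℂ)) (δ+1-j) * poch (g+(j:ℂ)) (δ+1-j) /
      ((j.factorial:ℂ) * ((δ+1-j).factorial:ℂ))) with hBf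
  have h2 : x*y*z * pdelta δ (x+1) (y+1) (z+1) (S+1) (F+1) (g+1)
      = ∑ κ ∈ Finset.range (δ+1), Bf (κ+1) := by
    unfold pdelta
    rw [Finset.mul_sum]
    refine Finset.sum_congr rfl fun κ hκ => ?_
    have hk : ((κ:ℂ)+1) ≠ 0 := by exact_mod_cast (Nat.succ_ne_zero κ)
    simp only [hBf, Nat.succ_sub_succ]
    rw [poch_succ' x, poch_succ' y, poch_succ' z,
        show (S + ((κ:ℕ)+1 : ℕ) : ℂ) = S + 1 + κ by push_cast; ring,
        show (F + ((κ:ℕ)+1 : ℕ) : ℂ) = F + 1 + κ by push_cast; ring,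
        show (g + ((κ:ℕ)+1 : ℕ) : ℂ) = g + 1 + κ by push_cast; ring,
        Nat.factorial_succ]
    simp only [Nat.cast_mul, Nat.cast_add, Nat.cast_one, pow_succ]
    field_simp [hfacC, hk]
  have h3 : -((δ:ℂ)+1) * pdelta (δ+1) x y z S F (g-1)
      = -((F+δ)*(g-1)*(S+δ)) * pdelta δ x y z S F g + ∑ κ ∈ Finset.range (δ+1), Bf (κ+1) := by
    unfold pdelta
    rw [Finset.mul_sum, Finset.sum_range_succ, Finset.mul_sum]
    have per : ∀ j ∈ Finset.range (δ+1),
        -((δ:ℂ)+1) * ((-1:ℂ)^j * poch x j * poch y j * poch z j *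
          poch (S+(j:ℂ)) (δ+1-j) * poch (F+(j:ℂ)) (δ+1-j) * poch (g-1+(j:ℂ)) (δ+1-j) /
          ((j.factorial:ℂ) * ((δ+1-j).factorial:ℂ)))
        = -((F+δ)*(g-1)*(S+δ)) * ((-1:ℂ)^j * poch x j * poch y j * poch z j *
          poch (S+(j:ℂ)) (δ-j) * poch (F+(j:ℂ)) (δ-j) * poch (g+(j:ℂ)) (δ-j) /
          ((j.factorial:ℂ) * ((δ-j).factorial:ℂ))) + Bf j := by
      intro j hj
      simp only [Finset.mem_range] at hj
      obtain ⟨i, rfl⟩ : ∃ i, δ = j + i := ⟨δ - j, by omega⟩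
      have hi1 : ((i:ℂ)+1) ≠ 0 := by exact_mod_cast (Nat.succ_ne_zero i)
      simp only [hBf]
      rw [show j + i + 1 - j = i + 1 by omega, show j + i - j = i by omega,
          poch_succ (S+(j:ℂ)) i, poch_succ (F+(j:ℂ)) i,
          poch_succ' (g-1+(j:ℂ)) i,
          show (g - 1 + (j:ℂ) + 1) = g + (j:ℂ) by ring,
          poch_succ (g+(j:ℂ)) i, Nat.factorial_succ]
      simp only [Nat.cast_mul, Nat.cast_add, Nat.cast_one]
      push_cast
      field_simp [hfacC, hi1]
      ring
    rw [Finset.sum_congr rfl per, Finset.sum_add_distrib]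
    have edge : -((δ:ℂ)+1) * ((-1:ℂ)^(δ+1) * poch x (δ+1) * poch y (δ+1) * poch z (δ+1) *
          poch (S+((δ+1:ℕ):ℂ)) (δ+1-(δ+1)) * poch (F+((δ+1:ℕ):ℂ)) (δ+1-(δ+1)) *
          poch (g-1+((δ+1:ℕ):ℂ)) (δ+1-(δ+1)) /
          (((δ+1).factorial:ℂ) * ((δ+1-(δ+1)).factorial:ℂ)))
        = Bf (δ+1) := by
      simp only [hBf, Nat.sub_self]
      simp only [poch, Finset.prod_range_zero]
      push_cast
      ring
    rw [edge]
    have bsplit : (∑ j ∈ Finset.range (δ+1), Bf j) + Bf (δ+1)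
        = ∑ κ ∈ Finset.range (δ+1), Bf (κ+1) := by
      rw [← Finset.sum_range_succ, Finset.sum_range_succ']
      simp [hBf]
    rw [add_assoc, bsplit]
  rw [h2, h3]

/-- The inductive step in the proof of Proposition 4.3(a) of Stade–Trinh:
`B(−a_m−δ−1,s_2,s_3)·R_δ(s_2,s_3) + R_δ(s_2,s_3+1)
  = −(δ+1)·[∏_{k∈{n,p,q}}(a_k−a_m−δ−1)]·R_{δ+1}(s_2,s_3)`. -/
theorem Rres_inductive_step (a : Fin 4 → ℂ) (m n p q : Fin 4)
    (hcover : ({m, n, p, q} : Finset (Fin 4)) = Finset.univ)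
    (δ : ℕ) (s2 s3 : ℂ)
    (h1 : ∀ k ∈ ({n, p, q} : Finset (Fin 4)), NotNonposInt (a k - a m - δ))
    (h2 : ∀ k ∈ ({n, p, q} : Finset (Fin 4)), NotNonposInt (a k - a m - δ - 1))
    (h3 : ∀ k ∈ ({n, p, q} : Finset (Fin 4)), NotNonposInt (s3 - a k))
    (h4 : ∀ k ∈ ({n, p, q} : Finset (Fin 4)), NotNonposInt (s3 + 1 - a k))
    (h5 : ∀ k ∈ ({n, p, q} : Finset (Fin 4)), NotNonposInt (s2 + a k + a m))
    (h6 : NotNonposInt (s2 + s3 + a m + δ))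
    (h7 : NotNonposInt (s2 + s3 + a m + δ + 1)) :
    Brec (-a m - δ - 1) s2 s3 * Rres a m n p q δ s2 s3 + Rres a m n p q δ s2 (s3 + 1)
      = -((δ : ℂ) + 1) *
          ((a n - a m - δ - 1) * (a p - a m - δ - 1) * (a q - a m - δ - 1)) *
          Rres a m n p q (δ + 1) s2 s3 := by
  have hmemn : n ∈ ({n, p, q} : Finset (Fin 4)) := by simp
  have hmemp : p ∈ ({n, p, q} : Finset (Fin 4)) := by simp
  have hmemq : q ∈ ({n, p, q} : Finset (Fin 4)) := by simp
  have hAn : a n - a m - (δ:ℂ) - 1 ≠ 0 := by simpa using h2 n hmemn 0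
  have hAp : a p - a m - (δ:ℂ) - 1 ≠ 0 := by simpa using h2 p hmemp 0
  have hAq : a q - a m - (δ:ℂ) - 1 ≠ 0 := by simpa using h2 q hmemq 0
  have hxn : s3 - a n ≠ 0 := by simpa using h3 n hmemn 0
  have hxp : s3 - a p ≠ 0 := by simpa using h3 p hmemp 0
  have hxq : s3 - a q ≠ 0 := by simpa using h3 q hmemq 0
  have hS0 : s2 + s3 + a m + (δ:ℂ) ≠ 0 := by simpa using h6 0
  have hG : Complex.Gamma (s2 + s3 + a m + (δ:ℂ)) ≠ 0 := Complex.Gamma_ne_zero h6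
  have gS : 1 / Complex.Gamma (s2 + s3 + a m + (δ:ℂ))
      = (s2 + s3 + a m + (δ:ℂ)) * (1 / Complex.Gamma (s2 + s3 + a m + (δ:ℂ) + 1)) := by
    rw [Complex.Gamma_add_one _ hS0]
    field_simp
  have gAn : Complex.Gamma (a n - a m - (δ:ℂ))
      = (a n - a m - (δ:ℂ) - 1) * Complex.Gamma (a n - a m - (δ:ℂ) - 1) := by
    have h := Complex.Gamma_add_one _ hAn
    rw [← h]
    congr 1
    ring
  have gAp : Complex.Gamma (a p - a m - (δ:ℂ))
      = (a p - a m - (δ:ℂ) - 1) * Complex.Gamma (a p - a m - (δ:ℂ) - 1) := by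
    have h := Complex.Gamma_add_one _ hAp
    rw [← h]
    congr 1
    ring
  have gAq : Complex.Gamma (a q - a m - (δ:ℂ))
      = (a q - a m - (δ:ℂ) - 1) * Complex.Gamma (a q - a m - (δ:ℂ) - 1) := by
    have h := Complex.Gamma_add_one _ hAq
    rw [← h]
    congr 1
    ring
  have hkey := key (s3 - a n) (s3 - a p) (s3 - a q) (s2 + s3 + a m)
      (1 + a m - s2 + s3) (s3 - a m - (δ:ℂ)) δ
  set_option maxRecDepth 8000 in simp only [Rres, Brec]
  simp only [Nat.cast_add, Nat.cast_one]
  rw [show s3 + 1 - a n = s3 - a n + 1 by ring,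
      show s3 + 1 - a p = s3 - a p + 1 by ring,
      show s3 + 1 - a q = s3 - a q + 1 by ring,
      show s2 + (s3 + 1) + a m = s2 + s3 + a m + 1 by ring,
      show 1 + a m - s2 + (s3 + 1) = 1 + a m - s2 + s3 + 1 by ring,
      show s3 + 1 - a m - (δ:ℂ) = s3 - a m - (δ:ℂ) + 1 by ring,
      show a n - a m - ((δ:ℂ) + 1) = a n - a m - (δ:ℂ) - 1 by ring,
      show a p - a m - ((δ:ℂ) + 1) = a p - a m - (δ:ℂ) - 1 by ring,
      show a q - a m - ((δ:ℂ) + 1) = a q - a m - (δ:ℂ) - 1 by ring,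
      show s3 - a m - ((δ:ℂ) + 1) = s3 - a m - (δ:ℂ) - 1 by ring,
      show s2 + s3 + a m + ((δ:ℂ) + 1) = s2 + s3 + a m + (δ:ℂ) + 1 by ring,
      show s2 + s3 + a m + 1 + (δ:ℂ) = s2 + s3 + a m + (δ:ℂ) + 1 by ring,
      gS, gAn, gAp, gAq,
      Complex.Gamma_add_one _ hxn, Complex.Gamma_add_one _ hxp, Complex.Gamma_add_one _ hxq]
  linear_combination ((1 / Complex.Gamma (s2 + s3 + a m + (δ:ℂ) + 1)) *
      (Complex.Gamma (a n - a m - (δ:ℂ) - 1) * Complex.Gamma (s3 - a n) *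
        Complex.Gamma (s2 + a n + a m) *
       (Complex.Gamma (a p - a m - (δ:ℂ) - 1) * Complex.Gamma (s3 - a p) *
        Complex.Gamma (s2 + a p + a m)) *
       (Complex.Gamma (a q - a m - (δ:ℂ) - 1) * Complex.Gamma (s3 - a q) *
        Complex.Gamma (s2 + a q + a m))) *
      ((a n - a m - (δ:ℂ) - 1) * (a p - a m - (δ:ℂ) - 1) * (a q - a m - (δ:ℂ) - 1))) * hkey
end

section
/- Let δ_1, δ_3 be nonnegative integers. There exists a polynomial g in the five variables (s_2, a_1, a_2, a_3, a_4), of total degree at most 2δ_1+δ_3, such that for all complex numbers a_1,a_2,a_3,a_4 with a_1+a_2+a_3+a_4 = 0 and for all s_2 ∈ ℂ with s_2+a_1+a_2 ∉ ℤ: ((−1)^{δ_3}/δ_3!)·Γ(s_2+a_1+a_2)·p_{δ_1}(−δ_3, a_2−a_3−δ_3, a_2−a_4−δ_3; s_2+a_1+a_2−δ_3, 1+a_1+a_2−s_2−δ_3, a_2−a_1−δ_1−δ_3) = Γ(s_2+a_1+a_2+δ_1−δ_3)·g(s_2, a_1, a_2, a_3, a_4). (This is the polynomial factorization, with degree bound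 2δ_1+δ_3, of the double residue of the GL(4) Whittaker Mellin transform T_{4,a}(s) at s_1 = −a_1−δ_1 and s_3 = a_2−δ_3.) -/
open Finset

/-- Pochhammer of a multivariate polynomial. -/
noncomputable def pochPoly (x : MvPolynomial (Fin 5) ℂ) (k : ℕ) : MvPolynomial (Fin 5) ℂ :=
  ∏ i ∈ Finset.range k, (x + MvPolynomial.C (i : ℂ))

lemma pochPoly_eval (v : Fin 5 → ℂ) (x : MvPolynomial (Fin 5) ℂ) (k : ℕ) :
    MvPolynomial.eval v (pochPoly x k) = poch (MvPolynomial.eval v x) k := by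
  simp [pochPoly, poch]

lemma totalDegree_natCast' (n : ℕ) :
    ((n : ℕ) : MvPolynomial (Fin 5) ℂ).totalDegree = 0 := by
  rw [← MvPolynomial.C_eq_coe_nat]; exact MvPolynomial.totalDegree_C _

lemma pochPoly_totalDegree (x : MvPolynomial (Fin 5) ℂ) (hx : x.totalDegree ≤ 1) (k : ℕ) :
    (pochPoly x k).totalDegree ≤ k := by
  refine le_trans (MvPolynomial.totalDegree_finset_prod _ _) ?_
  calc ∑ i ∈ Finset.range k, (x + MvPolynomial.C (i : ℂ)).totalDegree
      ≤ ∑ _i ∈ Finset.range k, 1 := by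
        refine Finset.sum_le_sum fun i _ => ?_
        refine le_trans (MvPolynomial.totalDegree_add _ _) ?_
        simp [hx, totalDegree_natCast']
    _ = k := by simp

lemma Gamma_add_nat (w : ℂ) (hw : ∀ n : ℤ, w ≠ n) :
    ∀ n : ℕ, Complex.Gamma (w + n) = poch w n * Complex.Gamma w
  | 0 => by simp [poch]
  | (n + 1) => by
    have h0 : w + n ≠ 0 := by
      intro h
      have := hw (-(n : ℤ))
      push_cast at this
      exact this (by linear_combination h)
    have : w + (n + 1 : ℕ) = (w + n) + 1 := by push_cast; ring
    rw [this, Complex.Gamma_add_one _ h0, Gamma_add_nat w hw n]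
    simp only [poch, Finset.prod_range_succ]
    ring

lemma key_swap (z : ℂ) (hz : ∀ n : ℤ, z ≠ n) (δ1 δ3 κ : ℕ) (h1 : κ ≤ δ1) (h3 : κ ≤ δ3) :
    Complex.Gamma z * poch (z - δ3 + κ) (δ1 - κ)
      = Complex.Gamma (z + δ1 - δ3) * poch (z - δ3 + κ) (δ3 - κ) := by
  set w : ℂ := z - δ3 + κ with hwdef
  have hw : ∀ n : ℤ, w ≠ n := by
    intro n h
    refine hz (n - κ + δ3) ?_
    push_cast
    linear_combination h
  have h1' : z + (δ1 : ℂ) - δ3 = w + ((δ1 - κ : ℕ) : ℂ) := by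
    rw [Nat.cast_sub h1, hwdef]; ring
  have h3' : z = w + ((δ3 - κ : ℕ) : ℂ) := by
    rw [Nat.cast_sub h3, hwdef]; ring
  calc Complex.Gamma z * poch w (δ1 - κ)
      = (poch w (δ3 - κ) * Complex.Gamma w) * poch w (δ1 - κ) := by
        rw [← Gamma_add_nat w hw, ← h3']
    _ = (poch w (δ1 - κ) * Complex.Gamma w) * poch w (δ3 - κ) := by ring
    _ = Complex.Gamma (z + δ1 - δ3) * poch w (δ3 - κ) := by
        rw [← Gamma_add_nat w hw, ← h1']

lemma poch_neg_nat_eq_zero (m κ : ℕ) (h : m < κ) : poch (-(m : ℂ)) κ = 0 := by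
  refine Finset.prod_eq_zero (Finset.mem_range.2 h) ?_
  simp

/-- Proposition 4.4(b) of Stade–Trinh (polynomial factorization with degree
bound `2δ_1 + δ_3` for the double residue of `T_{4,a}(s)` at
`s_1 = −a_1−δ_1`, `s_3 = a_2−δ_3`). -/
theorem double_residue_s1_s3 (δ1 δ3 : ℕ) :
    ∃ g : MvPolynomial (Fin 5) ℂ, g.totalDegree ≤ 2 * δ1 + δ3 ∧
      ∀ a1 a2 a3 a4 : ℂ, a1 + a2 + a3 + a4 = 0 →
        ∀ s2 : ℂ, (∀ z : ℤ, s2 + a1 + a2 ≠ (z : ℂ)) →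
          ((-1 : ℂ) ^ δ3 / (δ3.factorial : ℂ)) * Complex.Gamma (s2 + a1 + a2) *
              pdelta δ1 (-(δ3 : ℂ)) (a2 - a3 - δ3) (a2 - a4 - δ3)
                (s2 + a1 + a2 - δ3) (1 + a1 + a2 - s2 - δ3) (a2 - a1 - δ1 - δ3)
            = Complex.Gamma (s2 + a1 + a2 + δ1 - δ3) *
                MvPolynomial.eval ![s2, a1, a2, a3, a4] g := by
  classical
  set X : Fin 5 → MvPolynomial (Fin 5) ℂ := MvPolynomial.X with hX
  set coef : ℕ → ℂ := fun κ =>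
    ((-1 : ℂ) ^ δ3 / (δ3.factorial : ℂ)) * ((-1 : ℂ) ^ κ * poch (-(δ3 : ℂ)) κ /
      ((κ.factorial : ℂ) * ((δ1 - κ).factorial : ℂ))) with hcoef
  refine ⟨∑ κ ∈ Finset.range (δ1 + 1),
    MvPolynomial.C (coef κ) *
      (pochPoly (X 2 - X 3 - MvPolynomial.C (δ3 : ℂ)) κ *
       pochPoly (X 2 - X 4 - MvPolynomial.C (δ3 : ℂ)) κ *
       pochPoly (X 0 + X 1 + X 2 - MvPolynomial.C (δ3 : ℂ) + MvPolynomial.C (κ : ℂ)) (δ3 - κ) *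
       pochPoly (MvPolynomial.C 1 + X 1 + X 2 - X 0 - MvPolynomial.C (δ3 : ℂ)
          + MvPolynomial.C (κ : ℂ)) (δ1 - κ) *
       pochPoly (X 2 - X 1 - MvPolynomial.C (δ1 : ℂ) - MvPolynomial.C (δ3 : ℂ)
          + MvPolynomial.C (κ : ℂ)) (δ1 - κ)), ?_, ?_⟩
  · -- degree bound
    refine le_trans (MvPolynomial.totalDegree_finset_sum _ _) ?_
    refine Finset.sup_le fun κ hκ => ?_
    have hκ1 : κ ≤ δ1 := Nat.lt_succ_iff.mp (Finset.mem_range.mp hκ)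
    have lin : ∀ (a b : Fin 5) (c : MvPolynomial (Fin 5) ℂ), c.totalDegree = 0 →
        (X a - X b + c).totalDegree ≤ 1 := by
      intro a b c hc
      refine le_trans (MvPolynomial.totalDegree_add _ _) ?_
      simp only [hc]
      refine max_le (le_trans (MvPolynomial.totalDegree_sub _ _) ?_) (by simp [totalDegree_natCast'])
      simp [hX, MvPolynomial.totalDegree_X, totalDegree_natCast']
    have deg1 : ∀ (p : MvPolynomial (Fin 5) ℂ), p.totalDegree ≤ 1 → ∀ k,
        (pochPoly p k).totalDegree ≤ k := fun p hp k => pochPoly_totalDegree p hp k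
    refine le_trans (MvPolynomial.totalDegree_mul _ _) ?_
    rw [MvPolynomial.totalDegree_C]
    simp only [zero_add]
    have h2 : ∀ (p q : MvPolynomial (Fin 5) ℂ), (p * q).totalDegree ≤
        p.totalDegree + q.totalDegree := MvPolynomial.totalDegree_mul
    calc (pochPoly (X 2 - X 3 - MvPolynomial.C (δ3 : ℂ)) κ *
       pochPoly (X 2 - X 4 - MvPolynomial.C (δ3 : ℂ)) κ *
       pochPoly (X 0 + X 1 + X 2 - MvPolynomial.C (δ3 : ℂ) + MvPolynomial.C (κ : ℂ)) (δ3 - κ) *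
       pochPoly (MvPolynomial.C 1 + X 1 + X 2 - X 0 - MvPolynomial.C (δ3 : ℂ)
          + MvPolynomial.C (κ : ℂ)) (δ1 - κ) *
       pochPoly (X 2 - X 1 - MvPolynomial.C (δ1 : ℂ) - MvPolynomial.C (δ3 : ℂ)
          + MvPolynomial.C (κ : ℂ)) (δ1 - κ)).totalDegree
        ≤ κ + κ + (δ3 - κ) + (δ1 - κ) + (δ1 - κ) := by
          refine le_trans (h2 _ _) (add_le_add (le_trans (h2 _ _) (add_le_add
            (le_trans (h2 _ _) (add_le_add (le_trans (h2 _ _) (add_le_add ?_ ?_)) ?_)) ?_)) ?_)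
          · refine deg1 _ ?_ _
            refine le_trans (MvPolynomial.totalDegree_sub _ _) ?_
            refine max_le (le_trans (MvPolynomial.totalDegree_sub _ _) ?_) (by simp [totalDegree_natCast'])
            simp [hX, MvPolynomial.totalDegree_X, totalDegree_natCast']
          · refine deg1 _ ?_ _
            refine le_trans (MvPolynomial.totalDegree_sub _ _) ?_
            refine max_le (le_trans (MvPolynomial.totalDegree_sub _ _) ?_) (by simp [totalDegree_natCast'])
            simp [hX, MvPolynomial.totalDegree_X, totalDegree_natCast']
          · refine deg1 _ ?_ _
            refine le_trans (MvPolynomial.totalDegree_add _ _) ?_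
            refine max_le (le_trans (MvPolynomial.totalDegree_sub _ _) ?_) (by simp [totalDegree_natCast'])
            refine max_le (le_trans (MvPolynomial.totalDegree_add _ _) ?_) (by simp [totalDegree_natCast'])
            refine max_le (le_trans (MvPolynomial.totalDegree_add _ _) ?_) ?_
            all_goals simp [hX, MvPolynomial.totalDegree_X, totalDegree_natCast']
          · refine deg1 _ ?_ _
            refine le_trans (MvPolynomial.totalDegree_add _ _) ?_
            refine max_le (le_trans (MvPolynomial.totalDegree_sub _ _) ?_) (by simp [totalDegree_natCast'])
            refine max_le (le_trans (MvPolynomial.totalDegree_sub _ _) ?_) (by simp [totalDegree_natCast'])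
            refine max_le (le_trans (MvPolynomial.totalDegree_add _ _) ?_) ?_
            · refine max_le (le_trans (MvPolynomial.totalDegree_add _ _) ?_) ?_
              all_goals simp [hX, MvPolynomial.totalDegree_X, totalDegree_natCast']
            · simp [hX, MvPolynomial.totalDegree_X, totalDegree_natCast']
          · refine deg1 _ ?_ _
            refine le_trans (MvPolynomial.totalDegree_add _ _) ?_
            refine max_le (le_trans (MvPolynomial.totalDegree_sub _ _) ?_) (by simp [totalDegree_natCast'])
            refine max_le (le_trans (MvPolynomial.totalDegree_sub _ _) ?_) (by simp [totalDegree_natCast'])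
            refine max_le (le_trans (MvPolynomial.totalDegree_sub _ _) ?_) (by simp [totalDegree_natCast'])
            simp [hX, MvPolynomial.totalDegree_X, totalDegree_natCast']
      _ ≤ 2 * δ1 + δ3 := by omega
  · -- the identity
    intro a1 a2 a3 a4 _hsum s2 hz
    rw [pdelta, Finset.mul_sum, map_sum, Finset.mul_sum]
    refine Finset.sum_congr rfl fun κ hκ => ?_
    have hκ1 : κ ≤ δ1 := Nat.lt_succ_iff.mp (Finset.mem_range.mp hκ)
    simp only [map_mul, pochPoly_eval, MvPolynomial.eval_C, hX, MvPolynomial.eval_X,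
      MvPolynomial.eval_sub, MvPolynomial.eval_add, hcoef]
    by_cases h3 : κ ≤ δ3
    · have key := key_swap (s2 + a1 + a2) hz δ1 δ3 κ hκ1 h3
      have e1 : (s2 + a1 + a2 - (δ3:ℂ) + κ) =
          MvPolynomial.eval ![s2, a1, a2, a3, a4] (X 0) +
          MvPolynomial.eval ![s2, a1, a2, a3, a4] (X 1) +
          MvPolynomial.eval ![s2, a1, a2, a3, a4] (X 2) - (δ3:ℂ) + (κ:ℂ) := by
        simp [hX]
      simp only [hX, MvPolynomial.eval_X] at e1 key ⊢
      simp only [Matrix.cons_val_zero, Matrix.cons_val_one, Matrix.head_cons,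
        Matrix.cons_val_two, Matrix.tail_cons, Matrix.cons_val_three,
        Matrix.cons_val_four] at *
      have arg1 : s2 + a1 + a2 - (δ3:ℂ) + (κ:ℂ) = s2 + a1 + a2 - (δ3:ℂ) + (κ:ℂ) := rfl
      -- rewrite pdelta's poch args to match
      have p1 : poch (s2 + a1 + a2 - (δ3:ℂ) + (κ:ℂ)) (δ1 - κ)
          = poch (s2 + a1 + a2 - (δ3:ℂ) + (κ:ℂ)) (δ1 - κ) := rfl
      have hA : (1 + a1 + a2 - s2 - (δ3:ℂ) + (κ:ℂ)) = ((1:ℂ) + a1 + a2 - s2 - δ3 + κ) := by ring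
      have hB : (a2 - a1 - (δ1:ℂ) - δ3 + κ) = (a2 - a1 - (δ1:ℂ) - δ3 + κ) := rfl
      linear_combination
        (((-1 : ℂ) ^ δ3 / (δ3.factorial : ℂ)) * ((-1 : ℂ) ^ κ * poch (-(δ3 : ℂ)) κ /
          ((κ.factorial : ℂ) * ((δ1 - κ).factorial : ℂ)))
          * poch (a2 - a3 - (δ3:ℂ)) κ * poch (a2 - a4 - (δ3:ℂ)) κ
          * poch (1 + a1 + a2 - s2 - (δ3:ℂ) + κ) (δ1 - κ)
          * poch (a2 - a1 - (δ1:ℂ) - δ3 + κ) (δ1 - κ)) * key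
    · have hz0 : poch (-(δ3 : ℂ)) κ = 0 := poch_neg_nat_eq_zero δ3 κ (by omega)
      simp [hz0]
end
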